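/- arXiv:2201.12759 — 2 statements merged into one kernel-verified Lean document; each statement's English description precedes it below -/
import Mathlib

section
/- For a zero-dimensional separable metric space X, the following are equivalent: (1) X is σ-compact; (2) player TWO has a winning strategy in the Menger game G_fin(O, O) on X; (3) player TWO has a winning strategy in the mildly Menger game G_fin(C_O, C_O) on X; (4) player ONE has a winning strategy in the mildly compact-clopen game on X; (5) player ONE has a winning strategy in the compact-clopen game on X; (6) player ONE has a winning strategy in the compact-open game on X. -/
/-- `X` is zero-dimensional: it is nonempty and has a base consisting of clopen sets. -/
def ZeroDim (X : Type*) [TopologicalSpace X] : Prop :=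
  Nonempty X ∧ ∀ (x : X) (U : Set X), IsOpen U → x ∈ U →
    ∃ C : Set X, IsClopen C ∧ x ∈ C ∧ C ⊆ U

/-- `𝒰` is a cover of `X` consisting of sets satisfying `P`
(e.g. an open cover for `P = IsOpen`, a clopen cover for `P = IsClopen`). -/
def IsCover {X : Type*} (P : Set X → Prop) (𝒰 : Set (Set X)) : Prop :=
  (∀ U ∈ 𝒰, P U) ∧ ⋃₀ 𝒰 = Set.univ

/-- The selection principle `S_fin(P-covers, P-covers)`: for every sequence of
`P`-covers `u n` there are finite subsets `v n ⊆ u n` whose union is a cover. -/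
def SelFin {X : Type*} (P : Set X → Prop) : Prop :=
  ∀ u : ℕ → Set (Set X), (∀ n, IsCover P (u n)) →
    ∃ v : ℕ → Set (Set X), (∀ n, (v n).Finite ∧ v n ⊆ u n) ∧
      (⋃ n, ⋃₀ v n) = Set.univ

/-- Player ONE has a winning strategy in the selection game `G_fin(P-covers, P-covers)`:
a strategy `σ`, depending on TWO's previous moves, always playing `P`-covers, such that for
every sequence of legal responses by TWO (finite subsets of the cover just played),
the union of TWO's choices fails to cover. -/
def ONEWinsSel {X : Type*} (P : Set X → Prop) : Prop :=
  ∃ σ : List (Set (Set X)) → Set (Set X),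
    (∀ h, IsCover P (σ h)) ∧
    ∀ v : ℕ → Set (Set X),
      (∀ n, (v n).Finite ∧ v n ⊆ σ (List.ofFn fun i : Fin n => v i)) →
      (⋃ n, ⋃₀ v n) ≠ Set.univ

/-- Player TWO has a winning strategy in the selection game `G_fin(P-covers, P-covers)`:
a strategy `τ`, depending on ONE's moves so far, such that against every sequence of
`P`-covers played by ONE, TWO's responses are legal (finite subsets of the corresponding
cover) and their union is a cover. -/
def TWOWinsSel {X : Type*} (P : Set X → Prop) : Prop :=
  ∃ τ : List (Set (Set X)) → Set (Set X),
    ∀ u : ℕ → Set (Set X), (∀ n, IsCover P (u n)) →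
      (∀ n, (τ (List.ofFn fun i : Fin (n + 1) => u i)).Finite ∧
        τ (List.ofFn fun i : Fin (n + 1) => u i) ⊆ u n) ∧
      (⋃ n, ⋃₀ τ (List.ofFn fun i : Fin (n + 1) => u i)) = Set.univ

/-- Player ONE has a winning strategy in the `Q`-`R` game (in round `n`, ONE picks a set
`K n` with `Q (K n)` and TWO responds with a set `U n` with `R (U n)` and `K n ⊆ U n`;
ONE wins if `⋃ n, U n = univ`).  E.g. `Q = IsCompact`, `R = IsClopen` is the
compact-clopen game; `R = IsOpen` gives the compact-open game. -/
def ONEWinsCC {X : Type*} (Q R : Set X → Prop) : Prop :=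
  ∃ σ : List (Set X) → Set X,
    (∀ h, Q (σ h)) ∧
    ∀ v : ℕ → Set X,
      (∀ n, R (v n) ∧ σ (List.ofFn fun i : Fin n => v i) ⊆ v n) →
      (⋃ n, v n) = Set.univ

/-- Player TWO has a winning strategy in the `Q`-`R` game: a strategy `τ`, depending on
ONE's moves so far, such that against every sequence of sets satisfying `Q` played by ONE,
TWO's responses satisfy `R`, contain ONE's corresponding sets, and fail to cover `X`. -/
def TWOWinsCC {X : Type*} (Q R : Set X → Prop) : Prop :=
  ∃ τ : List (Set X) → Set X,
    ∀ u : ℕ → Set X, (∀ n, Q (u n)) →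
      (∀ n, R (τ (List.ofFn fun i : Fin (n + 1) => u i)) ∧
        u n ⊆ τ (List.ofFn fun i : Fin (n + 1) => u i)) ∧
      (⋃ n, τ (List.ofFn fun i : Fin (n + 1) => u i)) ≠ Set.univ

/-- A subset `K` of `X` is mildly compact if every cover of `K` by clopen subsets
of `X` contains a finite subcover. -/
def MildlyCompact {X : Type*} [TopologicalSpace X] (K : Set X) : Prop :=
  ∀ 𝒰 : Set (Set X), (∀ U ∈ 𝒰, IsClopen U) → K ⊆ ⋃₀ 𝒰 →
    ∃ 𝒱 ⊆ 𝒰, 𝒱.Finite ∧ K ⊆ ⋃₀ 𝒱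

/-- The quasi-component of a subset `K` of `X`: the intersection of all clopen
subsets of `X` containing `K`. -/
def QuasiComp {X : Type*} [TopologicalSpace X] (K : Set X) : Set X :=
  ⋂₀ {C : Set X | IsClopen C ∧ K ⊆ C}

open Set TopologicalSpace

section Aux
variable {X : Type*} [TopologicalSpace X]

lemma isClopen_sUnion_finite {F : Set (Set X)} (hF : F.Finite)
    (h : ∀ A ∈ F, IsClopen A) : IsClopen (⋃₀ F) := by
  rw [Set.sUnion_eq_biUnion]
  exact hF.isClopen_biUnion h

lemma compact_mildlyCompact {K : Set X} (hK : IsCompact K) : MildlyCompact K := by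
  intro 𝒰 hcl hcov
  obtain ⟨t, ht⟩ := hK.elim_finite_subcover (fun U : 𝒰 => (U : Set X))
    (fun U => (hcl U U.2).isOpen) (by rwa [← Set.sUnion_eq_iUnion])
  refine ⟨(fun U : 𝒰 => (U : Set X)) '' ↑t, ?_, t.finite_toSet.image _, ?_⟩
  · rintro V ⟨U, _, rfl⟩; exact U.2
  · intro x hx
    obtain ⟨U, hU, hxU⟩ := Set.mem_iUnion₂.1 (ht hx)
    exact ⟨U, ⟨U, hU, rfl⟩, hxU⟩

/-- A countable clopen base. -/
lemma exists_clopen_base [SecondCountableTopology X]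
    (hX : ∀ (x : X) (U : Set X), IsOpen U → x ∈ U → ∃ C, IsClopen C ∧ x ∈ C ∧ C ⊆ U) :
    ∃ 𝒞 : Set (Set X), 𝒞.Countable ∧ (∀ C ∈ 𝒞, IsClopen C) ∧
      ∀ (x : X) (W : Set X), IsOpen W → x ∈ W → ∃ C ∈ 𝒞, x ∈ C ∧ C ⊆ W := by
  obtain ⟨b, hbc, -, hb⟩ := exists_countable_basis X
  classical
  set pick : Set X × Set X → Set X := fun p =>
    if h : ∃ C, IsClopen C ∧ p.1 ⊆ C ∧ C ⊆ p.2 then h.choose else ∅ with hpick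
  set S : Set (Set X × Set X) :=
    (b ×ˢ b) ∩ {p | ∃ C, IsClopen C ∧ p.1 ⊆ C ∧ C ⊆ p.2} with hS
  have hspec : ∀ p ∈ S, IsClopen (pick p) ∧ p.1 ⊆ pick p ∧ pick p ⊆ p.2 := by
    intro p hp
    have h := hp.2
    simp only [Set.mem_setOf_eq] at h
    simp only [hpick]
    rw [dif_pos h]
    exact h.choose_spec
  refine ⟨pick '' S, ((hbc.prod hbc).mono Set.inter_subset_left).image _, ?_, ?_⟩
  · rintro C ⟨p, hp, rfl⟩
    exact (hspec p hp).1
  · intro x W hW hxW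
    obtain ⟨V, hVb, hxV, hVW⟩ := hb.exists_subset_of_mem_open hxW hW
    obtain ⟨C, hC, hxC, hCV⟩ := hX x V (hb.isOpen hVb) hxV
    obtain ⟨U, hUb, hxU, hUC⟩ := hb.exists_subset_of_mem_open hxC hC.isOpen
    have hpS : (U, V) ∈ S := ⟨⟨hUb, hVb⟩, ⟨C, hC, hUC, hCV⟩⟩
    obtain ⟨h1, h2, h3⟩ := hspec (U, V) hpS
    exact ⟨pick (U, V), ⟨_, hpS, rfl⟩, h2 hxU, h3.trans hVW⟩

lemma mildlyCompact_isCompact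
    {𝒞 : Set (Set X)} (hcl : ∀ C ∈ 𝒞, IsClopen C)
    (hbase : ∀ (x : X) (W : Set X), IsOpen W → x ∈ W → ∃ C ∈ 𝒞, x ∈ C ∧ C ⊆ W)
    {K : Set X} (hK : MildlyCompact K) : IsCompact K := by
  classical
  apply isCompact_of_finite_subcover
  intro ι U hUo hKU
  obtain ⟨𝒱, h𝒱sub, h𝒱fin, hK𝒱⟩ := hK {C ∈ 𝒞 | ∃ i, C ⊆ U i}
    (fun C hC => hcl C hC.1)
    (by
      intro x hx
      obtain ⟨i, hi⟩ := Set.mem_iUnion.1 (hKU hx)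
      obtain ⟨C, hC𝒞, hxC, hCU⟩ := hbase x (U i) (hUo i) hi
      exact ⟨C, ⟨hC𝒞, i, hCU⟩, hxC⟩)
  rcases isEmpty_or_nonempty ι with hι | hι
  · refine ⟨∅, ?_⟩
    intro x hx
    obtain ⟨i, _⟩ := Set.mem_iUnion.1 (hKU hx)
    exact (hι.false i).elim
  · set f : Set X → ι := fun C =>
      if h : ∃ i, C ⊆ U i then h.choose else Classical.arbitrary ι with hf
    refine ⟨h𝒱fin.toFinset.image f, ?_⟩
    intro x hx
    obtain ⟨C, hC𝒱, hxC⟩ := hK𝒱 hx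
    have hCex : ∃ i, C ⊆ U i := (h𝒱sub hC𝒱).2
    refine Set.mem_biUnion (Finset.mem_image_of_mem f (h𝒱fin.mem_toFinset.2 hC𝒱)) ?_
    have : f C = hCex.choose := dif_pos hCex
    rw [this]
    exact hCex.choose_spec hxC

lemma mildlyCompact_approx
    {𝒞 : Set (Set X)} (hcl : ∀ C ∈ 𝒞, IsClopen C)
    (hbase : ∀ (x : X) (W : Set X), IsOpen W → x ∈ W → ∃ C ∈ 𝒞, x ∈ C ∧ C ⊆ W)
    {K O : Set X} (hK : MildlyCompact K) (hO : IsOpen O) (hKO : K ⊆ O) :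
    ∃ F ⊆ 𝒞, F.Finite ∧ K ⊆ ⋃₀ F ∧ ⋃₀ F ⊆ O := by
  obtain ⟨𝒱, h𝒱sub, h𝒱fin, hK𝒱⟩ := hK {C ∈ 𝒞 | C ⊆ O}
    (fun C hC => hcl C hC.1)
    (fun x hx => by
      obtain ⟨C, hC𝒞, hxC, hCO⟩ := hbase x O hO (hKO hx)
      exact ⟨C, ⟨hC𝒞, hCO⟩, hxC⟩)
  exact ⟨𝒱, fun C hC => (h𝒱sub hC).1, h𝒱fin, hK𝒱,
    Set.sUnion_subset fun C hC => (h𝒱sub hC).2⟩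

lemma ofFn_getD (l : List (Set (Set X))) (d : Set (Set X)) :
    (List.ofFn fun i : Fin l.length => l.getD i d) = l := by
  have : (fun i : Fin l.length => l.getD i d) = l.get := by
    funext i
    rw [List.getD_eq_getElem l d i.2]
    simp
  rw [this, List.ofFn_get]

end Aux

section Easy
variable {X : Type*} [TopologicalSpace X]

lemma compact_elim_sUnion {K : Set X} (hK : IsCompact K) {𝒰 : Set (Set X)}
    (ho : ∀ U ∈ 𝒰, IsOpen U) (hcov : K ⊆ ⋃₀ 𝒰) :
    ∃ F, F.Finite ∧ F ⊆ 𝒰 ∧ K ⊆ ⋃₀ F := by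
  obtain ⟨t, ht⟩ := hK.elim_finite_subcover (fun U : 𝒰 => (U : Set X))
    (fun U => ho U U.2) (by rwa [← Set.sUnion_eq_iUnion])
  refine ⟨(fun U : 𝒰 => (U : Set X)) '' ↑t, t.finite_toSet.image _, ?_, ?_⟩
  · rintro V ⟨U, _, rfl⟩; exact U.2
  · intro x hx
    obtain ⟨U, hU, hxU⟩ := Set.mem_iUnion₂.1 (ht hx)
    exact ⟨U, ⟨U, hU, rfl⟩, hxU⟩

lemma getD_ofFn_last (u : ℕ → Set (Set X)) (n : ℕ) :
    (List.ofFn fun i : Fin (n + 1) => u i).getD n ∅ = u n := by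
  have h2 : n < (List.ofFn fun i : Fin (n + 1) => u i).length := by simp
  rw [List.getD_eq_getElem _ _ h2, List.getElem_ofFn]

lemma sigma_TWOWinsSel [SigmaCompactSpace X] : TWOWinsSel (X := X) IsOpen := by
  classical
  set pick : ℕ → Set (Set X) → Set (Set X) := fun n 𝒰 =>
    if h : ∃ F, F.Finite ∧ F ⊆ 𝒰 ∧ compactCovering X n ⊆ ⋃₀ F then h.choose else ∅
    with hpickdef
  have hpick : ∀ n 𝒰, IsCover IsOpen 𝒰 → (pick n 𝒰).Finite ∧ pick n 𝒰 ⊆ 𝒰 ∧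
      compactCovering X n ⊆ ⋃₀ (pick n 𝒰) := by
    intro n 𝒰 h𝒰
    have hex : ∃ F, F.Finite ∧ F ⊆ 𝒰 ∧ compactCovering X n ⊆ ⋃₀ F :=
      compact_elim_sUnion (isCompact_compactCovering X n) h𝒰.1
        (by rw [h𝒰.2]; exact Set.subset_univ _)
    simp only [hpickdef]
    rw [dif_pos hex]
    exact ⟨hex.choose_spec.1, hex.choose_spec.2.1, hex.choose_spec.2.2⟩
  refine ⟨fun l => pick (l.length - 1) (l.getD (l.length - 1) ∅), ?_⟩
  intro u hu
  simp only [List.length_ofFn, Nat.add_sub_cancel, getD_ofFn_last]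
  constructor
  · exact fun n => ⟨(hpick n (u n) (hu n)).1, (hpick n (u n) (hu n)).2.1⟩
  · apply Set.eq_univ_of_univ_subset
    rw [← iUnion_compactCovering X]
    refine Set.iUnion_subset fun n => ?_
    exact ((hpick n (u n) (hu n)).2.2).trans
      (Set.subset_iUnion (fun m => ⋃₀ pick m (u m)) n)

lemma TWOWinsSel_open_clopen (h : TWOWinsSel (X := X) IsOpen) :
    TWOWinsSel (X := X) IsClopen := by
  obtain ⟨τ, hτ⟩ := h
  exact ⟨τ, fun u hu => hτ u fun n => ⟨fun U hU => ((hu n).1 U hU).isOpen, (hu n).2⟩⟩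

lemma sigma_ONEWinsCC [SigmaCompactSpace X] (R : Set X → Prop) :
    ONEWinsCC (X := X) IsCompact R := by
  refine ⟨fun l => compactCovering X l.length, fun h => isCompact_compactCovering X _, ?_⟩
  intro v hv
  apply Set.eq_univ_of_univ_subset
  rw [← iUnion_compactCovering X]
  refine Set.iUnion_subset fun n => ?_
  have := (hv n).2
  simp only [List.length_ofFn] at this
  exact this.trans (Set.subset_iUnion v n)

lemma ONEWinsCC_open_clopen (h : ONEWinsCC (X := X) IsCompact IsOpen) :
    ONEWinsCC (X := X) IsCompact IsClopen := by
  obtain ⟨σ, hσQ, hσ⟩ := h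
  exact ⟨σ, hσQ, fun v hv => hσ v fun n => ⟨((hv n).1).isOpen, (hv n).2⟩⟩

lemma ONEWinsCC_compact_mildly (h : ONEWinsCC (X := X) IsCompact IsClopen) :
    ONEWinsCC (X := X) MildlyCompact IsClopen := by
  obtain ⟨σ, hσQ, hσ⟩ := h
  exact ⟨σ, fun l => compact_mildlyCompact (hσQ l), hσ⟩

end Easy

lemma ofFn_succ_concat {α : Type*} (v : ℕ → α) (n : ℕ) :
    (List.ofFn fun i : Fin (n + 1) => v i) = (List.ofFn fun i : Fin n => v i) ++ [v n] := by
  rw [List.ofFn_succ']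
  simp [List.concat_eq_append]

section Big1
variable {X : Type*} [TopologicalSpace X] [T1Space X]

lemma ONEWinsCC_sigma
    {𝒞 : Set (Set X)} (h𝒞c : 𝒞.Countable) (hcl : ∀ C ∈ 𝒞, IsClopen C)
    (hbase : ∀ (x : X) (W : Set X), IsOpen W → x ∈ W → ∃ C ∈ 𝒞, x ∈ C ∧ C ⊆ W)
    (h : ONEWinsCC (X := X) MildlyCompact IsClopen) : SigmaCompactSpace X := by
  classical
  obtain ⟨σ, hσQ, hσ⟩ := h
  set 𝒟 : Set (Set X) := insert Set.univ (Set.sUnion '' {F | F.Finite ∧ F ⊆ 𝒞}) with h𝒟def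
  have h𝒟c : 𝒟.Countable := ((Set.countable_setOf_finite_subset h𝒞c).image _).insert _
  have h𝒟ne : 𝒟.Nonempty := ⟨Set.univ, Set.mem_insert _ _⟩
  obtain ⟨e, he⟩ := h𝒟c.exists_eq_range h𝒟ne
  -- every value of σ is compact
  have hKcomp : ∀ l : List ℕ, IsCompact (σ (l.map e)) :=
    fun l => mildlyCompact_isCompact hcl hbase (hσQ _)
  -- coverage claim
  have hcover : ∀ x : X, ∃ l : List ℕ, x ∈ σ (l.map e) := by
    intro x
    by_contra hx
    push_neg at hx
    have hex : ∀ l : List ℕ, ∃ k, IsClopen (e k) ∧ σ (l.map e) ⊆ e k ∧ x ∉ e k := by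
      intro l
      have hsub : σ (l.map e) ⊆ {x}ᶜ := fun y hy hyx => by
        simp only [Set.mem_singleton_iff] at hyx
        subst hyx
        exact hx l hy
      obtain ⟨F, hF𝒞, hFfin, hKF, hFsub⟩ := mildlyCompact_approx hcl hbase (hσQ (l.map e))
        isOpen_compl_singleton hsub
      have h𝒟mem : ⋃₀ F ∈ 𝒟 := Set.mem_insert_iff.2 (Or.inr ⟨F, ⟨hFfin, hF𝒞⟩, rfl⟩)
      rw [he] at h𝒟mem
      obtain ⟨k, hk⟩ := h𝒟mem
      refine ⟨k, ?_, ?_, ?_⟩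
      · rw [hk]; exact isClopen_sUnion_finite hFfin fun A hA => hcl A (hF𝒞 hA)
      · rw [hk]; exact hKF
      · rw [hk]; exact fun hxF => (hFsub hxF) rfl
    set pick : List ℕ → ℕ := fun l => (hex l).choose with hpickdef
    set L : ℕ → List ℕ := fun n => Nat.rec [] (fun _ l => l ++ [pick l]) n with hLdef
    have hLs : ∀ n, L (n + 1) = L n ++ [pick (L n)] := fun n => rfl
    set v : ℕ → Set X := fun n => e (pick (L n)) with hvdef
    have hform : ∀ n, (List.ofFn fun i : Fin n => v i) = (L n).map e := by
      intro n
      induction n with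
      | zero => rfl
      | succ m ih => rw [ofFn_succ_concat, ih, hLs m]; simp; rfl
    have hlegal : ∀ n, IsClopen (v n) ∧ σ (List.ofFn fun i : Fin n => v i) ⊆ v n := by
      intro n
      obtain ⟨h1, h2, _⟩ := (hex (L n)).choose_spec
      exact ⟨h1, by rw [hform n]; exact h2⟩
    have huniv := hσ v hlegal
    have hxmem : x ∈ ⋃ n, v n := huniv ▸ Set.mem_univ x
    obtain ⟨n, hn⟩ := Set.mem_iUnion.1 hxmem
    exact (hex (L n)).choose_spec.2.2 hn
  rw [← isSigmaCompact_univ_iff]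
  refine ⟨fun n => σ ((Denumerable.ofNat (List ℕ) n).map e), fun n => hKcomp _, ?_⟩
  apply Set.eq_univ_of_univ_subset
  intro x _
  obtain ⟨l, hl⟩ := hcover x
  exact Set.mem_iUnion.2 ⟨Encodable.encode l, by rwa [Denumerable.ofNat_encode]⟩

end Big1

lemma ofFn_getD' {α : Type*} (l : List α) (n : ℕ) (hn : l.length = n + 1) (d : α) :
    (List.ofFn fun i : Fin (n + 1) => l.getD ↑i d) = l := by
  apply List.ext_getElem
  · simp [hn]
  · intro i h1 h2
    rw [List.getElem_ofFn]
    exact List.getD_eq_getElem l d h2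

section Big2
variable {X : Type*} [TopologicalSpace X]

lemma TWOWinsSel_sigma
    {𝒞 : Set (Set X)} (h𝒞c : 𝒞.Countable) (hcl : ∀ C ∈ 𝒞, IsClopen C)
    (hbase : ∀ (x : X) (W : Set X), IsOpen W → x ∈ W → ∃ C ∈ 𝒞, x ∈ C ∧ C ⊆ W)
    (h : TWOWinsSel (X := X) IsClopen) : SigmaCompactSpace X := by
  classical
  obtain ⟨τ, hτ⟩ := h
  set 𝒞' : Set (Set X) := insert Set.univ 𝒞 with h𝒞'def
  have h𝒞'c : 𝒞'.Countable := h𝒞c.insert _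
  have h𝒞'cl : ∀ C ∈ 𝒞', IsClopen C := by
    rintro C (rfl | hC)
    · exact isClopen_univ
    · exact hcl C hC
  set Cov : Set (Set (Set X)) := {𝒰 | 𝒰 ⊆ 𝒞' ∧ IsCover IsClopen 𝒰} with hCovdef
  have hunivCov : {Set.univ} ∈ Cov := by
    refine ⟨Set.singleton_subset_iff.2 (Set.mem_insert _ _), ?_, ?_⟩
    · rintro U rfl; exact isClopen_univ
    · simp
  -- the response to a finite history is a legal finite subset
  have hresp : ∀ (s : List (Set (Set X))), (∀ a ∈ s, IsCover IsClopen a) →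
      ∀ 𝒰, IsCover IsClopen 𝒰 → (τ (s ++ [𝒰])).Finite ∧ τ (s ++ [𝒰]) ⊆ 𝒰 := by
    intro s hs 𝒰 h𝒰
    set u : ℕ → Set (Set X) := fun n => (s ++ [𝒰]).getD n {Set.univ} with hudef
    have hu : ∀ n, IsCover IsClopen (u n) := by
      intro n
      by_cases hn : n < (s ++ [𝒰]).length
      · have : u n = (s ++ [𝒰])[n] := List.getD_eq_getElem _ _ hn
        rw [this]
        have hmem : (s ++ [𝒰])[n] ∈ s ++ [𝒰] := List.getElem_mem hn
        rcases List.mem_append.1 hmem with hmem | hmem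
        · exact hs _ hmem
        · rw [List.mem_singleton.1 hmem]; exact h𝒰
      · have : u n = {Set.univ} := List.getD_eq_default _ _ (le_of_not_gt hn)
        rw [this]
        exact ⟨by rintro U rfl; exact isClopen_univ, by simp⟩
    have hlen : (s ++ [𝒰]).length = s.length + 1 := by simp
    have hofn : (List.ofFn fun i : Fin (s.length + 1) => u i) = s ++ [𝒰] :=
      ofFn_getD' (s ++ [𝒰]) s.length hlen {Set.univ}
    have := (hτ u hu).1 s.length
    rw [hofn] at this
    have hlast : u s.length = 𝒰 := by
      rw [hudef]
      simp
    rw [hlast] at this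
    exact this
  -- the fundamental compact sets
  set C : List (Set (Set X)) → Set X := fun s => ⋂ 𝒰 ∈ Cov, ⋃₀ τ (s ++ [𝒰]) with hCdef
  have hCclosed : ∀ s, (∀ a ∈ s, IsCover IsClopen a) → IsClosed (C s) := by
    intro s hs
    refine isClosed_biInter fun 𝒰 h𝒰 => ?_
    exact (isClopen_sUnion_finite (hresp s hs 𝒰 h𝒰.2).1
      (fun A hA => h𝒰.2.1 A ((hresp s hs 𝒰 h𝒰.2).2 hA))).isClosed
  have hCmild : ∀ s, (∀ a ∈ s, IsCover IsClopen a) → MildlyCompact (C s) := by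
    intro s hs 𝒲 h𝒲cl h𝒲cov
    set 𝒰₀ : Set (Set X) := {B ∈ 𝒞' | (∃ W ∈ 𝒲, B ⊆ W) ∨ B ⊆ (C s)ᶜ} with h𝒰₀def
    have h𝒰₀Cov : 𝒰₀ ∈ Cov := by
      refine ⟨Set.sep_subset _ _, fun U hU => h𝒞'cl U hU.1, ?_⟩
      apply Set.eq_univ_of_univ_subset
      intro x _
      by_cases hx : x ∈ C s
      · obtain ⟨W, hW𝒲, hxW⟩ := h𝒲cov hx
        obtain ⟨B, hB𝒞, hxB, hBW⟩ := hbase x W (h𝒲cl W hW𝒲).isOpen hxW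
        exact ⟨B, ⟨Set.mem_insert_of_mem _ hB𝒞, Or.inl ⟨W, hW𝒲, hBW⟩⟩, hxB⟩
      · obtain ⟨B, hB𝒞, hxB, hBc⟩ := hbase x (C s)ᶜ (hCclosed s hs).isOpen_compl hx
        exact ⟨B, ⟨Set.mem_insert_of_mem _ hB𝒞, Or.inr hBc⟩, hxB⟩
    have hF := hresp s hs 𝒰₀ h𝒰₀Cov.2
    have hCF : C s ⊆ ⋃₀ τ (s ++ [𝒰₀]) := Set.biInter_subset_of_mem h𝒰₀Cov
    set g : Set X → Set X := fun B => if h : ∃ W ∈ 𝒲, B ⊆ W then h.choose else ∅ with hgdef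
    have hgspec : ∀ B, (∃ W ∈ 𝒲, B ⊆ W) → g B ∈ 𝒲 ∧ B ⊆ g B := by
      intro B hB
      simp only [hgdef]
      rw [dif_pos hB]
      exact ⟨hB.choose_spec.1, hB.choose_spec.2⟩
    refine ⟨g '' {B ∈ τ (s ++ [𝒰₀]) | ∃ W ∈ 𝒲, B ⊆ W}, ?_, ?_, ?_⟩
    · rintro V ⟨B, hB, rfl⟩
      exact (hgspec B hB.2).1
    · exact ((hF.1.subset (Set.sep_subset _ _)).image _)
    · intro x hx
      obtain ⟨B, hBF, hxB⟩ := hCF hx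
      have hB𝒰₀ : B ∈ 𝒰₀ := hF.2 hBF
      rcases hB𝒰₀.2 with hBW | hBc
      · exact ⟨g B, ⟨B, ⟨hBF, hBW⟩, rfl⟩, (hgspec B hBW).2 hxB⟩
      · exact absurd hx (hBc hxB)
  -- enumerate possible responses
  set 𝔽 : Set (Set (Set X)) := {F | F.Finite ∧ F ⊆ 𝒞'} with h𝔽def
  have h𝔽c : 𝔽.Countable := Set.countable_setOf_finite_subset h𝒞'c
  obtain ⟨eF, heF⟩ := h𝔽c.exists_eq_range ⟨∅, Set.finite_empty, Set.empty_subset _⟩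
  -- witness covers
  set w : List (Set (Set X)) → Set (Set X) → Set (Set X) := fun s F =>
    if h : ∃ 𝒰 ∈ Cov, τ (s ++ [𝒰]) = F then h.choose else {Set.univ} with hwdef
  have hwCov : ∀ s F, w s F ∈ Cov := by
    intro s F
    simp only [hwdef]
    by_cases h : ∃ 𝒰 ∈ Cov, τ (s ++ [𝒰]) = F
    · rw [dif_pos h]; exact h.choose_spec.1
    · rw [dif_neg h]; exact hunivCov
  have hwspec : ∀ s F, (∃ 𝒰 ∈ Cov, τ (s ++ [𝒰]) = F) → τ (s ++ [w s F]) = F := by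
    intro s F hex
    simp only [hwdef]
    rw [dif_pos hex]
    exact hex.choose_spec.2
  -- the countable tree of histories
  set node : List ℕ → List (Set (Set X)) :=
    fun l => List.rec [] (fun k _ ih => ih ++ [w ih (eF k)]) l with hnodedef
  have hnodecons : ∀ (k : ℕ) (l : List ℕ),
      node (k :: l) = node l ++ [w (node l) (eF k)] := fun k l => rfl
  have hnodeCov : ∀ l, ∀ a ∈ node l, IsCover IsClopen a := by
    intro l
    induction l with
    | nil => intro a ha; exact absurd ha (List.not_mem_nil (a := a))
    | cons k l ih =>
      intro a ha
      rw [hnodecons] at ha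
      rcases List.mem_append.1 ha with ha | ha
      · exact ih a ha
      · rw [List.mem_singleton.1 ha]; exact (hwCov (node l) (eF k)).2
  -- coverage
  have hcover : ∀ x : X, ∃ l : List ℕ, x ∈ C (node l) := by
    intro x
    by_contra hx
    push_neg at hx
    have hex : ∀ l : List ℕ, ∃ k : ℕ,
        τ (node l ++ [w (node l) (eF k)]) = eF k ∧ x ∉ ⋃₀ eF k := by
      intro l
      have hxl := hx l
      rw [hCdef] at hxl
      simp only [Set.mem_iInter, not_forall] at hxl
      obtain ⟨𝒰, h𝒰Cov, hx𝒰⟩ := hxl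
      have hFmem : τ (node l ++ [𝒰]) ∈ 𝔽 :=
        ⟨(hresp (node l) (hnodeCov l) 𝒰 h𝒰Cov.2).1,
          ((hresp (node l) (hnodeCov l) 𝒰 h𝒰Cov.2).2).trans h𝒰Cov.1⟩
      rw [heF] at hFmem
      obtain ⟨k, hk⟩ := hFmem
      refine ⟨k, hwspec (node l) (eF k) ⟨𝒰, h𝒰Cov, hk.symm⟩, ?_⟩
      rw [hk]
      exact hx𝒰
    set pickk : List ℕ → ℕ := fun l => (hex l).choose with hpickkdef
    set L : ℕ → List ℕ := fun n => Nat.rec [] (fun _ l => pickk l :: l) n with hLdef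
    have hLs : ∀ n, L (n + 1) = pickk (L n) :: L n := fun n => rfl
    set u : ℕ → Set (Set X) := fun n => w (node (L n)) (eF (pickk (L n))) with hudef
    have hform : ∀ n, (List.ofFn fun i : Fin n => u i) = node (L n) := by
      intro n
      induction n with
      | zero => rfl
      | succ m ih =>
        rw [ofFn_succ_concat, ih, hLs m, hnodecons]
    have hu : ∀ n, IsCover IsClopen (u n) := fun n => (hwCov _ _).2
    have huniv := (hτ u hu).2
    have hxmem : x ∈ ⋃ n, ⋃₀ τ (List.ofFn fun i : Fin (n + 1) => u i) :=
      huniv ▸ Set.mem_univ x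
    obtain ⟨n, hn⟩ := Set.mem_iUnion.1 hxmem
    have heq : (List.ofFn fun i : Fin (n + 1) => u i) = node (L (n + 1)) := hform (n + 1)
    rw [heq, hLs n, hnodecons] at hn
    rw [(hex (L n)).choose_spec.1] at hn
    exact (hex (L n)).choose_spec.2 hn
  -- conclude
  rw [← isSigmaCompact_univ_iff]
  refine ⟨fun n => C (node (Denumerable.ofNat (List ℕ) n)),
    fun n => mildlyCompact_isCompact hcl hbase (hCmild _ (hnodeCov _)), ?_⟩
  apply Set.eq_univ_of_univ_subset
  intro x _
  obtain ⟨l, hl⟩ := hcover x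
  exact Set.mem_iUnion.2 ⟨Encodable.encode l, by rwa [Denumerable.ofNat_encode]⟩

end Big2

/-- For a zero-dimensional separable metric space `X`, the following are equivalent:
(1) `X` is σ-compact; (2) TWO wins the Menger game; (3) TWO wins the mildly Menger game;
(4) ONE wins the mildly compact-clopen game; (5) ONE wins the compact-clopen game;
(6) ONE wins the compact-open game. -/
theorem stmt10 {X : Type*} [MetricSpace X] [TopologicalSpace.SeparableSpace X]
    (hX : ZeroDim X) :
    List.TFAE [SigmaCompactSpace X,
      TWOWinsSel (X := X) IsOpen,
      TWOWinsSel (X := X) IsClopen,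
      ONEWinsCC (X := X) MildlyCompact IsClopen,
      ONEWinsCC (X := X) IsCompact IsClopen,
      ONEWinsCC (X := X) IsCompact IsOpen] := by
  haveI : SecondCountableTopology X :=
    UniformSpace.secondCountable_of_separable X
  obtain ⟨𝒞, h𝒞c, h𝒞cl, h𝒞base⟩ := exists_clopen_base hX.2
  tfae_have 1 → 2
  | h1 => by
    have := h1
    exact sigma_TWOWinsSel
  tfae_have 2 → 3
  | h2 => TWOWinsSel_open_clopen h2
  tfae_have 3 → 1
  | h3 => TWOWinsSel_sigma h𝒞c h𝒞cl h𝒞base h3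
  tfae_have 1 → 6
  | h1 => by
    have := h1
    exact sigma_ONEWinsCC IsOpen
  tfae_have 6 → 5
  | h6 => ONEWinsCC_open_clopen h6
  tfae_have 5 → 4
  | h5 => ONEWinsCC_compact_mildly h5
  tfae_have 4 → 1
  | h4 => ONEWinsCC_sigma h𝒞c h𝒞cl h𝒞base h4
  tfae_finish
end

section
/- For any topological space X, player TWO has a winning strategy in the compact-clopen game on X if and only if player TWO has a winning strategy in the K-quasi-component-clopen game on X. -/
section

variable {X : Type*}

theorem TWOWinsCC.of_forall_exists_harder {Q Q' R : Set X → Prop}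
    (h : ∀ A, Q A → ∃ B, Q' B ∧ ∀ U, R U → B ⊆ U → A ⊆ U) (hwin : TWOWinsCC Q' R) :
    TWOWinsCC Q R := by
  choose! f hfQ' hfR using h
  obtain ⟨τ, hτ⟩ := hwin
  refine ⟨fun moves => τ (moves.map f), fun u hu => ?_⟩
  have hmap : ∀ n, (List.ofFn fun i : Fin (n + 1) => u i).map f =
      List.ofFn fun i : Fin (n + 1) => f (u i) := fun _ => List.map_ofFn
  obtain ⟨hlegal, hmiss⟩ := hτ (fun n => f (u n)) fun n => hfQ' _ (hu n)
  simp only [hmap]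
  exact ⟨fun n => ⟨(hlegal n).1, hfR _ (hu n) _ (hlegal n).1 (hlegal n).2⟩, hmiss⟩

variable [TopologicalSpace X]

theorem subset_quasiComp (K : Set X) : K ⊆ QuasiComp K :=
  fun _ hx _ hC => hC.2 hx

theorem quasiComp_subset_of_isClopen {K U : Set X} (hU : IsClopen U) (hKU : K ⊆ U) :
    QuasiComp K ⊆ U :=
  fun _ hx => hx U ⟨hU, hKU⟩

theorem quasiComp_subset_iff_of_isClopen {K U : Set X} (hU : IsClopen U) :
    QuasiComp K ⊆ U ↔ K ⊆ U :=
  ⟨(subset_quasiComp K).trans, quasiComp_subset_of_isClopen hU⟩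

end

/-- TWO has a winning strategy in the compact-clopen game on `X` iff TWO has a winning
strategy in the `K`-quasi-component-clopen game on `X` (where ONE plays
quasi-components of compact subsets of `X`). -/
theorem stmt12 {X : Type*} [TopologicalSpace X] :
    TWOWinsCC (X := X) IsCompact IsClopen ↔
      TWOWinsCC (X := X) (fun A => ∃ K : Set X, IsCompact K ∧ A = QuasiComp K) IsClopen := by
  constructor
  · refine TWOWinsCC.of_forall_exists_harder ?_
    rintro _ ⟨K, hK, rfl⟩
    exact ⟨K, hK, fun U hU => (quasiComp_subset_iff_of_isClopen hU).2⟩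
  · refine TWOWinsCC.of_forall_exists_harder fun K hK => ?_
    exact ⟨QuasiComp K, ⟨K, hK, rfl⟩, fun U hU => (quasiComp_subset_iff_of_isClopen hU).1⟩
end
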